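/- arXiv:2605.30781 — 2 statements merged into one kernel-verified Lean document; each statement's English description precedes it below -/
import Mathlib

section
/- Let n, m ≥ 2 with max{n, m} ≥ 3, let G = B_{n,m} be the dumbbell graph on V = A ∪ B, and set Δ₂ = δ_NF^(2)(Δ(G)). Then every facet of δ_NF(Δ₂) = δ_NF^(3)(Δ(G)) has the form (A ∖ {x}) ∪ (B ∖ {y}) with x ∈ A and y ∈ B, where moreover x = x_1 or y = y_1. -/
/-- `C` is a vertex cover of the complex with facet family `F`:
it meets every facet. -/
def IsVC {V : Type*} (F : Set (Set V)) (C : Set V) : Prop :=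
  ∀ f ∈ F, (C ∩ f).Nonempty

/-- `C` is a minimal vertex cover. -/
def IsMinVC {V : Type*} (F : Set (Set V)) (C : Set V) : Prop :=
  IsVC F C ∧ ∀ D : Set V, D ⊂ C → ¬ IsVC F D

/-- The NF-operator on facet families: the facets of `nf F` are the
complements of the minimal vertex covers of `F`. -/
def nf {V : Type*} (F : Set (Set V)) : Set (Set V) :=
  {S | ∃ C : Set V, IsMinVC F C ∧ S = Cᶜ}

/-- The dumbbell graph `B_{n,m}` as a family of edges (facets) on the vertex
set `Fin n ⊕ Fin m`: all pairs inside `A = range Sum.inl`, all pairs inside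
`B = range Sum.inr`, and the bridge edge `{x₁, y₁}` (indices `0`). -/
def dumbbell (n m : ℕ) : Set (Set (Fin n ⊕ Fin m)) :=
  {e | (∃ i j : Fin n, i ≠ j ∧ e = {Sum.inl i, Sum.inl j}) ∨
       (∃ i j : Fin m, i ≠ j ∧ e = {Sum.inr i, Sum.inr j}) ∨
       (∃ (hn : 0 < n) (hm : 0 < m), e = {Sum.inl ⟨0, hn⟩, Sum.inr ⟨0, hm⟩})}

/-! Taking complements, the facets of `nf F` are the maximal sets containing no facet of `F`.
For the dumbbell these maximal independent sets are the cross pairs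
`{x, y}` other than the bridge; for that family they are `A`, `B` and the bridge itself;
in both cases one exhibits an antichain of independent sets dominating every independent set.
Finally an independent set of `{A, B, {x₁, y₁}}` misses a point of `A`, a point of `B` and an
endpoint of the bridge, so a maximal one is the complement of `{x₁, y}` or of `{x, y₁}`. -/

open Set

section Independence

variable {V : Type*}

def IsIndependent (F : Set (Set V)) (S : Set V) : Prop :=
  ∀ f ∈ F, ¬ f ⊆ S

theorem isVC_iff_isIndependent_compl {F : Set (Set V)} {C : Set V} :
    IsVC F C ↔ IsIndependent F Cᶜ := by
  refine forall₂_congr fun f _ => ?_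
  rw [subset_compl_iff_disjoint_left, ← not_disjoint_iff_nonempty_inter]

theorem isMinVC_iff_maximal_compl {F : Set (Set V)} {C : Set V} :
    IsMinVC F C ↔ Maximal (IsIndependent F) Cᶜ := by
  rw [maximal_iff_forall_gt, IsMinVC, isVC_iff_isIndependent_compl]
  refine and_congr_right fun _ => ⟨fun h T hT => ?_, fun h D hD => ?_⟩
  · rw [← compl_compl T, ← isVC_iff_isIndependent_compl]
    exact h _ (compl_lt_compl_iff_lt.1 (by rwa [compl_compl]))
  · rw [isVC_iff_isIndependent_compl]
    exact h (compl_lt_compl_iff_lt.2 hD)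

theorem mem_nf_iff {F : Set (Set V)} {S : Set V} :
    S ∈ nf F ↔ Maximal (IsIndependent F) S := by
  refine ⟨?_, fun h => ⟨Sᶜ, ?_, (compl_compl S).symm⟩⟩
  · rintro ⟨C, hC, rfl⟩
    exact isMinVC_iff_maximal_compl.1 hC
  · rwa [isMinVC_iff_maximal_compl, compl_compl]

end Independence

theorem maximal_iff_mem_of_isAntichain {α : Type*} [PartialOrder α] {P : α → Prop}
    {M : Set α} (hPM : ∀ x ∈ M, P x) (hM : IsAntichain (· ≤ ·) M)
    (hle : ∀ x, P x → ∃ y ∈ M, x ≤ y) {x : α} :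
    Maximal P x ↔ x ∈ M := by
  refine ⟨fun hx => ?_, fun hx => ⟨hPM x hx, fun z hz hxz => ?_⟩⟩
  · obtain ⟨y, hyM, hxy⟩ := hle x hx.prop
    rwa [hx.eq_of_le (hPM y hyM) hxy]
  · obtain ⟨y, hyM, hzy⟩ := hle z hz
    rwa [hM.eq hx hyM (hxz.trans hzy)]

theorem Set.Subsingleton.exists_subset_singleton_mem_or_ne {α : Type*} [Nontrivial α]
    {s : Set α} (hs : s.Subsingleton) (a₀ : α) : ∃ x, s ⊆ {x} ∧ (x ∈ s ∨ x ≠ a₀) := by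
  rcases hs.eq_empty_or_singleton with rfl | ⟨x, rfl⟩
  · obtain ⟨x, hx⟩ := exists_ne a₀
    exact ⟨x, empty_subset _, Or.inr hx⟩
  · exact ⟨x, subset_rfl, Or.inl rfl⟩

section Dumbbell

variable {α β : Type*} (a₀ : α) (b₀ : β)

def dumbbellOn : Set (Set (α ⊕ β)) :=
  {e | (∃ i j, i ≠ j ∧ e = {Sum.inl i, Sum.inl j}) ∨
       (∃ i j, i ≠ j ∧ e = {Sum.inr i, Sum.inr j}) ∨
       e = {Sum.inl a₀, Sum.inr b₀}}

def crossEdgesOffBridge : Set (Set (α ⊕ β)) :=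
  {e | ∃ x y, (x ≠ a₀ ∨ y ≠ b₀) ∧ e = {Sum.inl x, Sum.inr y}}

def sidesAndBridge : Set (Set (α ⊕ β)) :=
  {range Sum.inl, range Sum.inr, {Sum.inl a₀, Sum.inr b₀}}

theorem dumbbell_eq_dumbbellOn {n m : ℕ} (hn : 0 < n) (hm : 0 < m) :
    dumbbell n m = dumbbellOn (⟨0, hn⟩ : Fin n) (⟨0, hm⟩ : Fin m) := by
  ext e
  simp [dumbbell, dumbbellOn, hn, hm]

variable {a₀ b₀}

theorem isIndependent_dumbbellOn_iff {S : Set (α ⊕ β)} :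
    IsIndependent (dumbbellOn a₀ b₀) S ↔
      (Sum.inl ⁻¹' S).Subsingleton ∧ (Sum.inr ⁻¹' S).Subsingleton ∧
        ¬(Sum.inl a₀ ∈ S ∧ Sum.inr b₀ ∈ S) := by
  refine ⟨fun h => ⟨fun x hx y hy => ?_, fun x hx y hy => ?_, fun hbr => ?_⟩, ?_⟩
  · by_contra hne
    exact h _ (Or.inl ⟨x, y, hne, rfl⟩) (pair_subset_iff.2 ⟨hx, hy⟩)
  · by_contra hne
    exact h _ (Or.inr (Or.inl ⟨x, y, hne, rfl⟩)) (pair_subset_iff.2 ⟨hx, hy⟩)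
  · exact h _ (Or.inr (Or.inr rfl)) (pair_subset_iff.2 hbr)
  · rintro ⟨hA, hB, hbr⟩ _ (⟨x, y, hne, rfl⟩ | ⟨x, y, hne, rfl⟩ | rfl) hsub <;>
      rw [pair_subset_iff] at hsub
    exacts [hne (hA hsub.1 hsub.2), hne (hB hsub.1 hsub.2), hbr hsub]

theorem isIndependent_crossEdgesOffBridge_iff {S : Set (α ⊕ β)} :
    IsIndependent (crossEdgesOffBridge a₀ b₀) S ↔
      ∀ x y, Sum.inl x ∈ S → Sum.inr y ∈ S → x = a₀ ∧ y = b₀ := by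
  refine ⟨fun h x y hx hy => ?_, ?_⟩
  · by_contra hne
    exact h _ ⟨x, y, not_and_or.1 hne, rfl⟩ (pair_subset_iff.2 ⟨hx, hy⟩)
  · rintro h _ ⟨x, y, hne, rfl⟩ hsub
    rw [pair_subset_iff] at hsub
    exact not_and_or.2 hne (h x y hsub.1 hsub.2)

theorem exists_crossEdgesOffBridge_superset [Nontrivial α] [Nontrivial β] {S : Set (α ⊕ β)}
    (hS : IsIndependent (dumbbellOn a₀ b₀) S) :
    ∃ e ∈ crossEdgesOffBridge a₀ b₀, S ⊆ e := by
  obtain ⟨hA, hB, hbr⟩ := isIndependent_dumbbellOn_iff.1 hS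
  obtain ⟨x, hAx, hx⟩ := hA.exists_subset_singleton_mem_or_ne a₀
  obtain ⟨y, hBy, hy⟩ := hB.exists_subset_singleton_mem_or_ne b₀
  refine ⟨_, ⟨x, y, ?_, rfl⟩, ?_⟩
  · by_contra! h
    obtain ⟨rfl, rfl⟩ := h
    exact hbr ⟨hx.resolve_right (not_not.2 rfl), hy.resolve_right (not_not.2 rfl)⟩
  · rintro (i | j) hv
    · exact Or.inl (congrArg Sum.inl (hAx hv))
    · exact Or.inr (congrArg Sum.inr (hBy hv))

theorem nf_dumbbellOn [Nontrivial α] [Nontrivial β] :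
    nf (dumbbellOn a₀ b₀) = crossEdgesOffBridge a₀ b₀ := by
  ext S
  rw [mem_nf_iff]
  refine maximal_iff_mem_of_isAntichain ?_ ?_ (fun _ => exists_crossEdgesOffBridge_superset)
  · rintro _ ⟨x, y, hne, rfl⟩
    rw [isIndependent_dumbbellOn_iff]
    refine ⟨?_, ?_, fun ⟨hx, hy⟩ => ?_⟩ <;> simp_all [Set.Subsingleton]
  · rintro _ ⟨x, y, -, rfl⟩ _ ⟨x', y', -, rfl⟩ hne hsub
    simp_all [pair_subset_iff]

theorem exists_sidesAndBridge_superset {S : Set (α ⊕ β)}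
    (hS : IsIndependent (crossEdgesOffBridge a₀ b₀) S) :
    ∃ e ∈ sidesAndBridge a₀ b₀, S ⊆ e := by
  rw [isIndependent_crossEdgesOffBridge_iff] at hS
  by_cases hA : ∃ x, Sum.inl x ∈ S
  · by_cases hB : ∃ y, Sum.inr y ∈ S
    · obtain ⟨x, hx⟩ := hA
      obtain ⟨y, hy⟩ := hB
      refine ⟨_, Or.inr (Or.inr rfl), ?_⟩
      rintro (i | j) hv
      · exact Or.inl (congrArg Sum.inl (hS i y hv hy).1)
      · exact Or.inr (congrArg Sum.inr (hS x j hx hv).2)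
    · refine ⟨_, Or.inl rfl, ?_⟩
      rintro (i | j) hv
      exacts [⟨i, rfl⟩, absurd ⟨j, hv⟩ hB]
  · refine ⟨_, Or.inr (Or.inl rfl), ?_⟩
    rintro (i | j) hv
    exacts [absurd ⟨i, hv⟩ hA, ⟨j, rfl⟩]

theorem nf_crossEdgesOffBridge [Nontrivial α] [Nontrivial β] :
    nf (crossEdgesOffBridge a₀ b₀) = sidesAndBridge a₀ b₀ := by
  ext S
  rw [mem_nf_iff]
  refine maximal_iff_mem_of_isAntichain ?_ ?_ (fun _ => exists_sidesAndBridge_superset)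
  · rintro _ (rfl | rfl | rfl) <;> rw [isIndependent_crossEdgesOffBridge_iff] <;> simp
  · rintro _ (rfl | rfl | rfl) _ (rfl | rfl | rfl) hne hsub <;> try exact hne rfl
    · simpa using hsub ⟨a₀, rfl⟩
    · obtain ⟨a, ha⟩ := exists_ne a₀
      simpa [ha] using hsub ⟨a, rfl⟩
    · simpa using hsub ⟨b₀, rfl⟩
    · obtain ⟨b, hb⟩ := exists_ne b₀
      simpa [hb] using hsub ⟨b, rfl⟩
    · simpa using hsub (Or.inr rfl)
    · simpa using hsub (Or.inl rfl)

theorem isIndependent_sidesAndBridge_compl_pair {x : α} {y : β} (hxy : x = a₀ ∨ y = b₀) :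
    IsIndependent (sidesAndBridge a₀ b₀) {Sum.inl x, Sum.inr y}ᶜ := by
  rintro _ (rfl | rfl | rfl) hsub
  · exact hsub ⟨x, rfl⟩ (Or.inl rfl)
  · exact hsub ⟨y, rfl⟩ (Or.inr rfl)
  · rcases hxy with rfl | rfl
    · exact hsub (Or.inl rfl) (Or.inl rfl)
    · exact hsub (Or.inr rfl) (Or.inr rfl)

theorem exists_eq_compl_pair_of_mem_nf_sidesAndBridge {S : Set (α ⊕ β)}
    (hS : S ∈ nf (sidesAndBridge a₀ b₀)) :
    ∃ x y, (x = a₀ ∨ y = b₀) ∧ S = {Sum.inl x, Sum.inr y}ᶜ := by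
  rw [mem_nf_iff] at hS
  have hind := hS.prop
  obtain ⟨a, ha⟩ : ∃ a, Sum.inl a ∉ S := by
    simpa [range_subset_iff] using hind _ (Or.inl rfl)
  obtain ⟨b, hb⟩ : ∃ b, Sum.inr b ∉ S := by
    simpa [range_subset_iff] using hind _ (Or.inr (Or.inl rfl))
  obtain ⟨x, y, hxy, hx, hy⟩ : ∃ x y, (x = a₀ ∨ y = b₀) ∧ Sum.inl x ∉ S ∧ Sum.inr y ∉ S := by
    by_cases ha₀ : Sum.inl a₀ ∈ S
    · have hb₀ : Sum.inr b₀ ∉ S := fun hb₀ =>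
        hind _ (Or.inr (Or.inr rfl)) (pair_subset_iff.2 ⟨ha₀, hb₀⟩)
      exact ⟨a, b₀, Or.inr rfl, ha, hb₀⟩
    · exact ⟨a₀, b, Or.inl rfl, ha₀, hb⟩
  refine ⟨x, y, hxy, hS.eq_of_le (isIndependent_sidesAndBridge_compl_pair hxy) ?_⟩
  simp [subset_compl_iff_disjoint_right, hx, hy]

end Dumbbell

theorem compl_pair_eq_sides_diff {α β : Type*} (x : α) (y : β) :
    ({Sum.inl x, Sum.inr y} : Set (α ⊕ β))ᶜ =
      (range Sum.inl \ {Sum.inl x}) ∪ (range Sum.inr \ {Sum.inr y}) := by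
  ext (a | b) <;> simp

/-- For `n, m ≥ 2` with `max{n,m} ≥ 3`, every facet of
`δ_NF^(3)(Δ(B_{n,m})) = δ_NF(Δ₂)` is of the form `(A ∖ {x}) ∪ (B ∖ {y})`
with `x ∈ A`, `y ∈ B`, and at least one of `x, y` a bridge endpoint
(`x = x₁` or `y = y₁`). -/
theorem dumbbell_nf_three_facets (n m : ℕ) (hn : 2 ≤ n) (hm : 2 ≤ m)
    (S : Set (Fin n ⊕ Fin m))
    (hS : S ∈ nf^[3] (dumbbell n m)) :
    ∃ (x : Fin n) (y : Fin m),
      (x = (⟨0, by omega⟩ : Fin n) ∨ y = (⟨0, by omega⟩ : Fin m)) ∧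
      S = (Set.range Sum.inl \ {Sum.inl x}) ∪
          (Set.range Sum.inr \ {Sum.inr y}) := by
  have : Nontrivial (Fin n) := Fin.nontrivial_iff_two_le.2 hn
  have : Nontrivial (Fin m) := Fin.nontrivial_iff_two_le.2 hm
  rw [Function.iterate_succ_apply', Function.iterate_succ_apply', Function.iterate_one,
    dumbbell_eq_dumbbellOn (by omega) (by omega), nf_dumbbellOn, nf_crossEdgesOffBridge] at hS
  obtain ⟨x, y, hxy, rfl⟩ := exists_eq_compl_pair_of_mem_nf_sidesAndBridge hS
  exact ⟨x, y, hxy, compl_pair_eq_sides_diff x y⟩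
end

section
/- Let Δ be a simplicial complex on V = A ∪ B that is invariant under 𝔖_A × 𝔖_B, with facet family the union over (i, j) ∈ α of 𝓜(i, j) for an antichain α ⊆ P. Then a subset C ⊆ V of type (a, b) is a vertex cover of Δ if and only if (a, b) ∉ I(ς(α)). Moreover, the set of types of minimal vertex covers of Δ equals ρ(ς(α)). -/
/-- The type of a subset of `Fin n ⊕ Fin m`: the pair
`(|F ∩ A|, |F ∩ B|)` where `A = range Sum.inl` and `B = range Sum.inr`. -/
noncomputable def typeOf {n m : ℕ} (S : Set (Fin n ⊕ Fin m)) : ℕ × ℕ :=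
  ((S ∩ Set.range Sum.inl).ncard, (S ∩ Set.range Sum.inr).ncard)

/-- The type-class `𝓜(i,j)`: all subsets of `Fin n ⊕ Fin m` of type `(i,j)`. -/
def Mclass (n m : ℕ) (p : ℕ × ℕ) : Set (Set (Fin n ⊕ Fin m)) :=
  {S | typeOf S = p}

/-- The grid poset `P = [0,n] × [0,m]` (inside `ℕ × ℕ` with the componentwise
order). -/
def Pgrid (n m : ℕ) : Set (ℕ × ℕ) := Set.Iic (n, m)

/-- The order ideal `I(ψ)` generated by `ψ`. -/
def orderIdeal (ψ : Set (ℕ × ℕ)) : Set (ℕ × ℕ) := {u | ∃ v ∈ ψ, u ≤ v}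

/-- Rowmotion `ρ(ψ)`: the minimal elements of `P ∖ I(ψ)`. -/
def rowmotion (n m : ℕ) (ψ : Set (ℕ × ℕ)) : Set (ℕ × ℕ) :=
  {u | u ∈ Pgrid n m \ orderIdeal ψ ∧
       ∀ v ∈ Pgrid n m \ orderIdeal ψ, v ≤ u → v = u}

/-- The involution `ς(a, b) = (n − a, m − b)` of `P`. -/
def sigmaMap (n m : ℕ) (p : ℕ × ℕ) : ℕ × ℕ := (n - p.1, m - p.2)

section Aux

variable {n m : ℕ}

lemma ncard_range_inl : (Set.range (Sum.inl : Fin n → Fin n ⊕ Fin m)).ncard = n := by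
  rw [Set.ncard_eq_toFinset_card', Set.toFinset_range,
    Finset.card_image_of_injective _ Sum.inl_injective]
  simp

lemma ncard_range_inr : (Set.range (Sum.inr : Fin m → Fin n ⊕ Fin m)).ncard = m := by
  rw [Set.ncard_eq_toFinset_card', Set.toFinset_range,
    Finset.card_image_of_injective _ Sum.inr_injective]
  simp

lemma typeOf_fst_le (S : Set (Fin n ⊕ Fin m)) : (typeOf S).1 ≤ n := by
  have := Set.ncard_le_ncard (Set.inter_subset_right (s := S)
    (t := Set.range (Sum.inl : Fin n → Fin n ⊕ Fin m))) (Set.toFinite _)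
  simpa [typeOf, ncard_range_inl] using this

lemma typeOf_snd_le (S : Set (Fin n ⊕ Fin m)) : (typeOf S).2 ≤ m := by
  have := Set.ncard_le_ncard (Set.inter_subset_right (s := S)
    (t := Set.range (Sum.inr : Fin m → Fin n ⊕ Fin m))) (Set.toFinite _)
  simpa [typeOf, ncard_range_inr] using this

lemma ncard_compl_inter_inl (C : Set (Fin n ⊕ Fin m)) :
    (Cᶜ ∩ Set.range Sum.inl).ncard = n - (C ∩ Set.range Sum.inl).ncard := by
  have hdisj : Disjoint (C ∩ Set.range Sum.inl) (Cᶜ ∩ Set.range Sum.inl) :=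
    (disjoint_compl_right.mono Set.inter_subset_left Set.inter_subset_left)
  have hunion : (C ∩ Set.range Sum.inl) ∪ (Cᶜ ∩ Set.range Sum.inl)
      = Set.range (Sum.inl : Fin n → Fin n ⊕ Fin m) := by
    rw [← Set.union_inter_distrib_right, Set.union_compl_self, Set.univ_inter]
  have := Set.ncard_union_eq hdisj (Set.toFinite _) (Set.toFinite _)
  rw [hunion, ncard_range_inl] at this
  omega

lemma ncard_compl_inter_inr (C : Set (Fin n ⊕ Fin m)) :
    (Cᶜ ∩ Set.range Sum.inr).ncard = m - (C ∩ Set.range Sum.inr).ncard := by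
  have hdisj : Disjoint (C ∩ Set.range Sum.inr) (Cᶜ ∩ Set.range Sum.inr) :=
    (disjoint_compl_right.mono Set.inter_subset_left Set.inter_subset_left)
  have hunion : (C ∩ Set.range Sum.inr) ∪ (Cᶜ ∩ Set.range Sum.inr)
      = Set.range (Sum.inr : Fin m → Fin n ⊕ Fin m) := by
    rw [← Set.union_inter_distrib_right, Set.union_compl_self, Set.univ_inter]
  have := Set.ncard_union_eq hdisj (Set.toFinite _) (Set.toFinite _)
  rw [hunion, ncard_range_inr] at this
  omega

lemma exists_subset_type (T : Set (Fin n ⊕ Fin m)) (i j : ℕ)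
    (hi : i ≤ (T ∩ Set.range Sum.inl).ncard) (hj : j ≤ (T ∩ Set.range Sum.inr).ncard) :
    ∃ S ⊆ T, typeOf S = (i, j) := by
  obtain ⟨S1, hS1, hc1⟩ := Set.exists_subset_card_eq hi
  obtain ⟨S2, hS2, hc2⟩ := Set.exists_subset_card_eq hj
  have hS1l : S1 ⊆ Set.range Sum.inl := hS1.trans Set.inter_subset_right
  have hS2r : S2 ⊆ Set.range Sum.inr := hS2.trans Set.inter_subset_right
  refine ⟨S1 ∪ S2, Set.union_subset (hS1.trans Set.inter_subset_left)
    (hS2.trans Set.inter_subset_left), ?_⟩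
  have h1 : (S1 ∪ S2) ∩ Set.range Sum.inl = S1 := by
    ext x
    constructor
    · rintro ⟨hx | hx, hr⟩
      · exact hx
      · exfalso
        obtain ⟨a, rfl⟩ := hS2r hx
        obtain ⟨b, hb⟩ := hr
        simp at hb
    · intro hx; exact ⟨Or.inl hx, hS1l hx⟩
  have h2 : (S1 ∪ S2) ∩ Set.range Sum.inr = S2 := by
    ext x
    constructor
    · rintro ⟨hx | hx, hr⟩
      · exfalso
        obtain ⟨a, rfl⟩ := hS1l hx
        obtain ⟨b, hb⟩ := hr
        simp at hb
      · exact hx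
    · intro hx; exact ⟨Or.inr hx, hS2r hx⟩
  simp [typeOf, h1, h2, hc1, hc2]

lemma typeOf_mono {D C : Set (Fin n ⊕ Fin m)} (h : D ⊆ C) : typeOf D ≤ typeOf C := by
  constructor <;>
    exact Set.ncard_le_ncard (Set.inter_subset_inter_left _ h) (Set.toFinite _)

lemma eq_of_subset_of_typeOf_eq {D C : Set (Fin n ⊕ Fin m)} (h : D ⊆ C)
    (ht : typeOf D = typeOf C) : D = C := by
  have h1 : D ∩ Set.range Sum.inl = C ∩ Set.range Sum.inl :=
    Set.eq_of_subset_of_ncard_le (Set.inter_subset_inter_left _ h)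
      (le_of_eq (congrArg Prod.fst ht).symm) (Set.toFinite _)
  have h2 : D ∩ Set.range Sum.inr = C ∩ Set.range Sum.inr :=
    Set.eq_of_subset_of_ncard_le (Set.inter_subset_inter_left _ h)
      (le_of_eq (congrArg Prod.snd ht).symm) (Set.toFinite _)
  have hD : D ∩ (Set.range Sum.inl ∪ Set.range Sum.inr) = D := by
    rw [Set.range_inl_union_range_inr, Set.inter_univ]
  have hC : C ∩ (Set.range Sum.inl ∪ Set.range Sum.inr) = C := by
    rw [Set.range_inl_union_range_inr, Set.inter_univ]
  rw [← hD, ← hC, Set.inter_union_distrib_left, Set.inter_union_distrib_left, h1, h2]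

/-- Key covering criterion for a single type class. -/
lemma covers_class_iff (C : Set (Fin n ⊕ Fin m)) (i j : ℕ) :
    (∀ f : Set (Fin n ⊕ Fin m), typeOf f = (i, j) → (C ∩ f).Nonempty) ↔
      ¬(i ≤ n - (typeOf C).1 ∧ j ≤ m - (typeOf C).2) := by
  constructor
  · rintro h ⟨hi, hj⟩
    rw [show n - (typeOf C).1 = (Cᶜ ∩ Set.range Sum.inl).ncard from
      (ncard_compl_inter_inl C).symm] at hi
    rw [show m - (typeOf C).2 = (Cᶜ ∩ Set.range Sum.inr).ncard from
      (ncard_compl_inter_inr C).symm] at hj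
    obtain ⟨S, hS, hSt⟩ := exists_subset_type Cᶜ i j hi hj
    obtain ⟨x, hxC, hxS⟩ := h S hSt
    exact hS hxS hxC
  · intro h f hf
    rw [Set.nonempty_iff_ne_empty]
    intro hemp
    apply h
    have hfc : f ⊆ Cᶜ := by
      intro x hx
      intro hxC
      exact Set.eq_empty_iff_forall_notMem.mp hemp x ⟨hxC, hx⟩
    have h1 : i ≤ (Cᶜ ∩ Set.range Sum.inl).ncard := by
      have := Set.ncard_le_ncard (Set.inter_subset_inter_left (Set.range Sum.inl) hfc)
        (Set.toFinite _)
      have hf1 : (f ∩ Set.range Sum.inl).ncard = i := congrArg Prod.fst hf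
      omega
    have h2 : j ≤ (Cᶜ ∩ Set.range Sum.inr).ncard := by
      have := Set.ncard_le_ncard (Set.inter_subset_inter_left (Set.range Sum.inr) hfc)
        (Set.toFinite _)
      have hf2 : (f ∩ Set.range Sum.inr).ncard = j := congrArg Prod.snd hf
      omega
    rw [ncard_compl_inter_inl] at h1
    rw [ncard_compl_inter_inr] at h2
    exact ⟨h1, h2⟩

end Aux

/-- For a `𝔖_A × 𝔖_B`-invariant complex whose facet family is
`⋃_{(i,j) ∈ α} 𝓜(i,j)` for an antichain `α ⊆ P`: a subset `C` of type `(a,b)`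
is a vertex cover iff `(a,b) ∉ I(ς(α))`, and the set of types of minimal
vertex covers equals `ρ(ς(α))`. -/
theorem cover_types_rowmotion (n m : ℕ)
    (F : Set (Set (Fin n ⊕ Fin m)))
    (α : Set (ℕ × ℕ)) (hα : IsAntichain (· ≤ ·) α) (hαP : α ⊆ Pgrid n m)
    (hFα : F = ⋃ p ∈ α, Mclass n m p) :
    (∀ C : Set (Fin n ⊕ Fin m),
      IsVC F C ↔ typeOf C ∉ orderIdeal (sigmaMap n m '' α)) ∧
    typeOf '' {C : Set (Fin n ⊕ Fin m) | IsMinVC F C} =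
      rowmotion n m (sigmaMap n m '' α) := by
  have key : ∀ C : Set (Fin n ⊕ Fin m),
      IsVC F C ↔ typeOf C ∉ orderIdeal (sigmaMap n m '' α) := by
    intro C
    subst hFα
    constructor
    · intro hvc hid
      obtain ⟨v, ⟨p, hpα, rfl⟩, hle⟩ := hid
      have hp := hαP hpα
      simp only [Pgrid, Set.mem_Iic, Prod.mk_le_mk, Prod.le_def] at hp hle
      have hvc' : ∀ f : Set (Fin n ⊕ Fin m), typeOf f = (p.1, p.2) → (C ∩ f).Nonempty := by
        intro f hf
        refine hvc f ?_
        simp only [Set.mem_iUnion]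
        exact ⟨p, hpα, hf⟩
      have hCa := typeOf_fst_le C
      have hCb := typeOf_snd_le C
      have := (covers_class_iff C p.1 p.2).mp hvc'
      simp only [sigmaMap] at hle
      omega
    · intro hid f hf
      simp only [Set.mem_iUnion, Mclass, Set.mem_setOf_eq] at hf
      obtain ⟨p, hpα, hfp⟩ := hf
      have hp := hαP hpα
      simp only [Pgrid, Set.mem_Iic, Prod.le_def] at hp
      have hCa := typeOf_fst_le C
      have hCb := typeOf_snd_le C
      have hnot : ¬(p.1 ≤ n - (typeOf C).1 ∧ p.2 ≤ m - (typeOf C).2) := by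
        intro ⟨h1, h2⟩
        apply hid
        exact ⟨sigmaMap n m p, ⟨p, hpα, rfl⟩, by
          simp only [sigmaMap, Prod.le_def]; omega⟩
      have := (covers_class_iff C p.1 p.2).mpr hnot
      exact this f (by rw [hfp])
  refine ⟨key, ?_⟩
  ext u
  constructor
  · rintro ⟨C, hC, rfl⟩
    obtain ⟨hvc, hmin⟩ := hC
    refine ⟨⟨⟨typeOf_fst_le C, typeOf_snd_le C⟩, (key C).mp hvc⟩, ?_⟩
    rintro v ⟨hvP, hvI⟩ hvle
    have hv1 : v.1 ≤ (C ∩ Set.range Sum.inl).ncard := hvle.1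
    have hv2 : v.2 ≤ (C ∩ Set.range Sum.inr).ncard := hvle.2
    obtain ⟨D, hDC, hDt⟩ := exists_subset_type C v.1 v.2 hv1 hv2
    have hDvc : IsVC F D := (key D).mpr (by rw [hDt]; exact hvI)
    by_cases hDeq : D = C
    · rw [← hDeq, hDt]
    · exact absurd hDvc (hmin D (ssubset_of_subset_of_ne hDC hDeq))
  · rintro ⟨⟨huP, huI⟩, humin⟩
    have hu1 : u.1 ≤ ((Set.univ : Set (Fin n ⊕ Fin m)) ∩ Set.range Sum.inl).ncard := by
      rw [Set.univ_inter, ncard_range_inl]; exact huP.1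
    have hu2 : u.2 ≤ ((Set.univ : Set (Fin n ⊕ Fin m)) ∩ Set.range Sum.inr).ncard := by
      rw [Set.univ_inter, ncard_range_inr]; exact huP.2
    obtain ⟨C, -, hCt⟩ := exists_subset_type Set.univ u.1 u.2 hu1 hu2
    refine ⟨C, ⟨(key C).mpr (by rw [hCt]; exact huI), ?_⟩, hCt⟩
    intro D hD hDvc
    have hDI : typeOf D ∉ orderIdeal (sigmaMap n m '' α) := (key D).mp hDvc
    have hDle : typeOf D ≤ u := by
      have h := typeOf_mono hD.subset
      rw [hCt] at h
      exact h
    have hDP : typeOf D ∈ Pgrid n m := ⟨typeOf_fst_le D, typeOf_snd_le D⟩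
    have := humin (typeOf D) ⟨hDP, hDI⟩ hDle
    exact hD.ne (eq_of_subset_of_typeOf_eq hD.subset (by rw [hCt, this]))
end
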